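/- The map φ(z,w) = (λz, −λ⁻¹w) with λ = (1+√5)/2 acts on the basis v₁, v₂, v₃, v₄ of Λ by φ(v₁) = −v₃ − v₄, φ(v₂) = v₁ + v₂ + v₃, φ(v₃) = v₂ + v₃ + v₄, and φ(v₄) = −v₁ − v₂; that is, in this basis φ is represented by the integer matrix with columns (0,0,−1,−1), (1,1,1,0), (0,1,1,1), (−1,−1,0,0). -/
import Mathlib


noncomputable section

/-- The primitive fifth root of unity `ζ = exp(2πi/5)`. -/
def ζ : ℂ := Complex.exp (2 * Real.pi * Complex.I / 5)

def v₁ : ℂ × ℂ := (1, 1)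
def v₂ : ℂ × ℂ := (ζ, ζ ^ 2)
def v₃ : ℂ × ℂ := (ζ ^ 2, ζ ^ 4)
def v₄ : ℂ × ℂ := (ζ ^ 3, ζ)

/-- The golden ratio `λ = (1+√5)/2`, as a complex number. -/
def gold : ℂ := (((1 + Real.sqrt 5) / 2 : ℝ) : ℂ)

/-- The `ℝ`-linear map `φ(z,w) = (λz, −λ⁻¹w)` of `ℂ²`. -/
def φ (p : ℂ × ℂ) : ℂ × ℂ := (gold * p.1, -gold⁻¹ * p.2)

lemma zeta_pow_five : ζ ^ 5 = 1 := by
  rw [ζ, ← Complex.exp_nat_mul,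
    show (5 : ℕ) * (2 * (Real.pi : ℂ) * Complex.I / 5) = 2 * Real.pi * Complex.I by push_cast; ring]
  exact Complex.exp_two_pi_mul_I

lemma zeta_add_pow_four : ζ + ζ ^ 4 = (((Real.sqrt 5 - 1) / 2 : ℝ) : ℂ) := by
  have h4 : ζ ^ 4 = Complex.exp (-(2 * Real.pi * Complex.I / 5)) := by
    have : ζ ^ 4 = ζ⁻¹ := eq_inv_of_mul_eq_one_left (by rw [← pow_succ]; exact zeta_pow_five)
    rw [this, ζ, ← Complex.exp_neg]
  have key : ζ + ζ ^ 4 = 2 * Complex.cos ((2 * Real.pi / 5 : ℝ) : ℂ) := by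
    rw [Complex.cos, h4, ζ]
    push_cast
    ring_nf
  rw [key, ← Complex.ofReal_cos]
  have : Real.cos (2 * Real.pi / 5) = (Real.sqrt 5 - 1) / 4 := by
    have h2 : (2 : ℝ) * Real.pi / 5 = 2 * (Real.pi / 5) := by ring
    rw [h2, Real.cos_two_mul, Real.cos_pi_div_five]
    have h5 : Real.sqrt 5 ^ 2 = 5 := Real.sq_sqrt (by norm_num)
    nlinarith [h5]
  rw [this]; push_cast; ring

lemma zeta_ne_one : ζ ≠ 1 := by
  have hζ : ζ = Complex.exp ((2 * Real.pi / 5 : ℝ) * Complex.I) := by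
    rw [ζ]; push_cast; ring_nf
  have him : ζ.im = Real.sin (2 * Real.pi / 5) := by
    rw [hζ, Complex.exp_ofReal_mul_I_im]
  have hpos : 0 < Real.sin (2 * Real.pi / 5) := by
    apply Real.sin_pos_of_pos_of_lt_pi
    · positivity
    · nlinarith [Real.pi_pos]
  intro h
  rw [h] at him
  simp at him
  linarith

lemma zeta_sum : ζ ^ 4 + ζ ^ 3 + ζ ^ 2 + ζ + 1 = 0 := by
  have h5 := zeta_pow_five
  have h1 : ζ - 1 ≠ 0 := sub_ne_zero.mpr zeta_ne_one
  have : (ζ - 1) * (ζ ^ 4 + ζ ^ 3 + ζ ^ 2 + ζ + 1) = 0 := by linear_combination h5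
  rcases mul_eq_zero.mp this with h | h
  · exact absurd h h1
  · exact h

lemma gold_eq : gold = 1 + ζ + ζ ^ 4 := by
  have h := zeta_add_pow_four
  rw [gold]
  push_cast at h ⊢
  linear_combination - h

lemma gold_inv : gold⁻¹ = ζ + ζ ^ 4 := by
  apply inv_eq_of_mul_eq_one_right
  rw [gold_eq]
  linear_combination (2 + ζ ^ 3) * zeta_pow_five + zeta_sum

/-- `φ` acts on the basis `v₁, v₂, v₃, v₄` of `Λ` by the integer matrix with columns
`(0,0,−1,−1)`, `(1,1,1,0)`, `(0,1,1,1)`, `(−1,−1,0,0)`. -/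
theorem monodromy_matrix_on_basis :
    φ v₁ = -v₃ - v₄ ∧
    φ v₂ = v₁ + v₂ + v₃ ∧
    φ v₃ = v₂ + v₃ + v₄ ∧
    φ v₄ = -v₁ - v₂ := by
  have h5 := zeta_pow_five
  have hs := zeta_sum
  refine ⟨?_, ?_, ?_, ?_⟩ <;>
    simp only [φ, v₁, v₂, v₃, v₄, Prod.mk_add_mk, Prod.neg_mk,
      Prod.mk_sub_mk, Prod.ext_iff] <;> rw [gold_inv, gold_eq] <;> constructor
  · linear_combination hs
  · ring
  · linear_combination h5
  · linear_combination (-ζ) * h5 - hs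
  · linear_combination ζ * h5
  · linear_combination (-1 - ζ ^ 3) * h5 - hs
  · linear_combination ζ ^ 2 * h5 + hs
  · linear_combination - h5

end
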